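/- Let f ∈ 𝕋[x] be a tangible polynomial of degree n ≥ 1 whose leading coefficient α_n lies in ℝ (is tangible). Then there exist a_1, …, a_n ∈ ℝ ∪ {-∞} such that f ∼ α_n ⊙ (x ⊕ a_1) ⊙ ⋯ ⊙ (x ⊕ a_n), i.e. f and this product of tangible linear factors take the same value at every point of 𝕋; moreover the multiset {a_1, …, a_n} is uniquely determined by f. -/

import Mathlib

/-- The extended tropical semiring `𝕋`: tangible reals `(a, false)`,
ghost reals `(a, true)`, and `none` = `-∞`. -/
def T : Type := Option (ℝ × Bool)

namespace T

/-- The tangible element of value `a`. -/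
def tang (a : ℝ) : T := some (a, false)

/-- The ghost element `a^ν` of value `a`. -/
def ghost (a : ℝ) : T := some (a, true)

/-- Tropical addition on `𝕋`. -/
noncomputable def add : T → T → T
  | none, y => y
  | some p, none => some p
  | some (a, s), some (b, t) =>
      if a < b then some (b, t) else if b < a then some (a, s) else some (a, true)

/-- Tropical multiplication on `𝕋`. -/
noncomputable def mul : T → T → T
  | none, _ => none
  | some _, none => none
  | some (a, s), some (b, t) => some (a + b, s || t)

lemma add_assoc' : ∀ x y z : T, add (add x y) z = add x (add y z) := by
  rintro (_ | ⟨a, s⟩) (_ | ⟨b, t⟩) (_ | ⟨c, u⟩) <;>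
    simp only [add, T] <;>
    (try split_ifs) <;>
    simp only [add, T] <;>
    (try split_ifs) <;>
    first
      | rfl
      | (exfalso; linarith)
      | (refine congrArg some ?_; refine Prod.ext ?_ ?_ <;>
          first | rfl | linarith | simp)

lemma add_comm' : ∀ x y : T, add x y = add y x := by
  rintro (_ | ⟨a, s⟩) (_ | ⟨b, t⟩) <;>
    simp only [add, T] <;>
    (try split_ifs) <;>
    first
      | rfl
      | (exfalso; linarith)
      | (refine congrArg some ?_; refine Prod.ext ?_ ?_ <;>
          first | rfl | linarith | simp)

lemma mul_assoc' : ∀ x y z : T, mul (mul x y) z = mul x (mul y z) := by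
  rintro (_ | ⟨a, s⟩) (_ | ⟨b, t⟩) (_ | ⟨c, u⟩) <;>
    simp [mul, T, add_assoc, Bool.or_assoc]

lemma mul_comm' : ∀ x y : T, mul x y = mul y x := by
  rintro (_ | ⟨a, s⟩) (_ | ⟨b, t⟩) <;> simp [mul, T, add_comm, Bool.or_comm]

lemma left_distrib' : ∀ x y z : T, mul x (add y z) = add (mul x y) (mul x z) := by
  rintro (_ | ⟨a, s⟩) (_ | ⟨b, t⟩) (_ | ⟨c, u⟩) <;>
    simp only [add, mul, T] <;>
    (try split_ifs) <;>
    simp only [add, mul, T] <;>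
    (try split_ifs) <;>
    first
      | rfl
      | (exfalso; linarith)
      | (refine congrArg some ?_; refine Prod.ext ?_ ?_ <;>
          first | rfl | linarith | simp)

noncomputable instance : Zero T := ⟨none⟩
noncomputable instance : One T := ⟨some (0, false)⟩
noncomputable instance : Add T := ⟨add⟩
noncomputable instance : Mul T := ⟨mul⟩

noncomputable instance : CommSemiring T where
  add := (· + ·)
  zero := 0
  add_assoc := add_assoc'
  zero_add := fun x => by cases x <;> rfl
  add_zero := fun x => by cases x <;> rfl
  add_comm := add_comm'
  mul := (· * ·)
  one := 1
  mul_assoc := mul_assoc'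
  one_mul := fun x => by
    show mul (some (0, false)) x = x
    rcases x with _ | ⟨a, s⟩ <;> simp [mul, T]
  mul_one := fun x => by
    show mul x (some (0, false)) = x
    rcases x with _ | ⟨a, s⟩ <;> simp [mul, T]
  mul_comm := mul_comm'
  zero_mul := fun x => by cases x <;> rfl
  mul_zero := fun x => by cases x <;> rfl
  left_distrib := left_distrib'
  right_distrib := fun x y z => by
    show mul (add x y) z = add (mul x z) (mul y z)
    rw [mul_comm', left_distrib', mul_comm' z x, mul_comm' z y]
  nsmul := nsmulRec

/-- Membership in the ghost part `𝕌̄ = 𝕌 ∪ {-∞}` of `𝕋`. -/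
def isGhost : T → Prop
  | none => True
  | some (_, s) => s = true

/-- Membership in the tangible part `ℝ ∪ {-∞}` of `𝕋`. -/
def isTangible : T → Prop
  | none => True
  | some (_, s) => s = false

/-- The underlying real value (junk value `0` at `-∞`); this is `π` on elements `≠ -∞`. -/
def val : T → ℝ
  | none => 0
  | some (a, _) => a

/-- The ghost map `ν`. -/
def nu : T → T
  | none => none
  | some (a, _) => some (a, true)

end T

namespace T

/-- The model value in the half line `[0,∞)`: `-∞ ↦ 0`, an element of value `a ↦ exp a`. -/
noncomputable def gval : T → ℝ
  | none => 0
  | some (a, _) => Real.exp a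

lemma nu_isGhost : ∀ x : T, isGhost (nu x)
  | none => trivial
  | some (_, _) => rfl

lemma gval_injOn_tang : Set.InjOn gval {x : T | isTangible x} := by
  rintro (_ | ⟨a, s⟩) hx (_ | ⟨b, t⟩) hy h <;>
    simp only [gval, Set.mem_setOf_eq, isTangible] at hx hy h
  · rfl
  · exact absurd h.symm (Real.exp_pos b).ne'
  · exact absurd h (Real.exp_pos a).ne'
  · rw [Real.exp_eq_exp] at h; subst hx; subst hy; subst h; rfl

lemma gval_injOn_ghost : Set.InjOn gval {x : T | isGhost x} := by
  rintro (_ | ⟨a, s⟩) hx (_ | ⟨b, t⟩) hy h <;>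
    simp only [gval, Set.mem_setOf_eq, isGhost] at hx hy h
  · rfl
  · exact absurd h.symm (Real.exp_pos b).ne'
  · exact absurd h (Real.exp_pos a).ne'
  · rw [Real.exp_eq_exp] at h; subst hx; subst hy; subst h; rfl

lemma gval_image_tang : gval '' {x : T | isTangible x} = Set.Ici 0 := by
  ext y
  constructor
  · rintro ⟨(_ | ⟨a, s⟩), hx, rfl⟩
    · exact Set.self_mem_Ici
    · exact le_of_lt (by simpa [gval] using Real.exp_pos a)
  · intro hy
    rcases eq_or_lt_of_le (Set.mem_Ici.mp hy) with h | h
    · exact ⟨none, trivial, h⟩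
    · exact ⟨some (Real.log y, false), rfl, by simp [gval, Real.exp_log h]⟩

lemma gval_image_ghost : gval '' {x : T | isGhost x} = Set.Ici 0 := by
  ext y
  constructor
  · rintro ⟨(_ | ⟨a, s⟩), hx, rfl⟩
    · exact Set.self_mem_Ici
    · exact le_of_lt (by simpa [gval] using Real.exp_pos a)
  · intro hy
    rcases eq_or_lt_of_le (Set.mem_Ici.mp hy) with h | h
    · exact ⟨none, trivial, h⟩
    · exact ⟨some (Real.log y, true), rfl, by simp [gval, Real.exp_log h]⟩

/-- The closed sets of the topology on `𝕋`: both the tangible and the ghost layers are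
closed in the model `[0,∞)` of `𝕌̄`, and the ghost image of the tangible layer is
contained in the set. -/
def TIsClosed (W : Set T) : Prop :=
  IsClosed (gval '' (W ∩ {x | isTangible x})) ∧
  IsClosed (gval '' (W ∩ {x | isGhost x})) ∧
  nu '' (W ∩ {x | isTangible x}) ⊆ W ∩ {x | isGhost x}

/-- The topology on `𝕋`. -/
noncomputable instance : TopologicalSpace T :=
  TopologicalSpace.ofClosed {W | TIsClosed W}
    (by
      refine ⟨?_, ?_, ?_⟩ <;> simp [TIsClosed])
    (fun A hA => by
      rcases A.eq_empty_or_nonempty with rfl | hne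
      · rw [Set.sInter_empty]
        refine ⟨?_, ?_, ?_⟩
        · rw [Set.univ_inter, gval_image_tang]; exact isClosed_Ici
        · rw [Set.univ_inter, gval_image_ghost]; exact isClosed_Ici
        · rintro y ⟨x, ⟨-, _⟩, rfl⟩
          exact ⟨trivial, nu_isGhost x⟩
      · have : Nonempty A := hne.to_subtype
        have h1 : (⋂₀ A) ∩ {x : T | isTangible x}
            = ⋂ (W : A), ((W : Set T) ∩ {x | isTangible x}) := by
          ext x
          simp only [Set.mem_inter_iff, Set.mem_sInter, Set.mem_iInter, Set.mem_setOf_eq]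
          constructor
          · rintro ⟨h, ht⟩ W; exact ⟨h W W.2, ht⟩
          · intro h
            obtain ⟨W, hW⟩ := hne
            exact ⟨fun V hV => (h ⟨V, hV⟩).1, (h ⟨W, hW⟩).2⟩
        have h2 : (⋂₀ A) ∩ {x : T | isGhost x}
            = ⋂ (W : A), ((W : Set T) ∩ {x | isGhost x}) := by
          ext x
          simp only [Set.mem_inter_iff, Set.mem_sInter, Set.mem_iInter, Set.mem_setOf_eq]
          constructor
          · rintro ⟨h, ht⟩ W; exact ⟨h W W.2, ht⟩
          · intro h
            obtain ⟨W, hW⟩ := hne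
            exact ⟨fun V hV => (h ⟨V, hV⟩).1, (h ⟨W, hW⟩).2⟩
        refine ⟨?_, ?_, ?_⟩
        · rw [h1, Set.InjOn.image_iInter_eq
            (gval_injOn_tang.mono (Set.iUnion_subset fun W => Set.inter_subset_right))]
          exact isClosed_iInter fun W => (hA W.2).1
        · rw [h2, Set.InjOn.image_iInter_eq
            (gval_injOn_ghost.mono (Set.iUnion_subset fun W => Set.inter_subset_right))]
          exact isClosed_iInter fun W => (hA W.2).2.1
        · rintro y ⟨x, ⟨hx, hxt⟩, rfl⟩
          refine ⟨fun W hW => ((hA hW).2.2 ⟨x, ⟨hx W hW, hxt⟩, rfl⟩).1, nu_isGhost x⟩)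
    (fun A hA B hB => by
      have h1 : (A ∪ B) ∩ {x : T | isTangible x}
          = (A ∩ {x | isTangible x}) ∪ (B ∩ {x | isTangible x}) :=
        Set.union_inter_distrib_right A B _
      have h2 : (A ∪ B) ∩ {x : T | isGhost x}
          = (A ∩ {x | isGhost x}) ∪ (B ∩ {x | isGhost x}) :=
        Set.union_inter_distrib_right A B _
      refine ⟨?_, ?_, ?_⟩
      · rw [h1, Set.image_union]; exact hA.1.union hB.1
      · rw [h2, Set.image_union]; exact hA.2.1.union hB.2.1
      · rintro y ⟨x, ⟨hx, hxt⟩, rfl⟩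
        rcases hx with hxA | hxB
        · have h := hA.2.2 ⟨x, ⟨hxA, hxt⟩, rfl⟩
          exact ⟨Or.inl h.1, h.2⟩
        · have h := hB.2.2 ⟨x, ⟨hxB, hxt⟩, rfl⟩
          exact ⟨Or.inr h.1, h.2⟩)

end T

/-!
Existence is by induction on the degree `n`. Unless `f = c_n x ^ n`, let `ρ` be the largest
point at which a lower term `c_k x ^ k` has the same value as the top term `c_n x ^ n`, say for
`k = k₀` (the top edge of the Newton polygon). Substituting `x = ρ ⊙ b` moves this tie to
`b = 1`, and comparing the terms for `b` below, at and above `1` shows that the polynomial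
agrees with `(b ⊕ 1) ^ (n - k₀)` times its truncation at degree `k₀`: a tangible polynomial of
smaller degree with the same leading coefficient.

Uniqueness: at a tangible point `x` the value `F x` of `∏ (x ⊕ r)` is `∑ max x r`, so the
multiplicity of a finite root `b` is the jump of slope of `F` at `b`, which is the second
difference `(F (b + ε) + F (b - ε) - 2 F b) / ε` for small `ε > 0`; the number of roots `-∞`
then follows from the degree.
-/

open Filter Topology

theorem Multiset.eq_of_card_eq_of_forall_ne_count_eq {α : Type*} [DecidableEq α]
    {s t : Multiset α} (a₀ : α) (hcard : card s = card t)
    (h : ∀ a ≠ a₀, count a s = count a t) : s = t := by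
  have hfilter : s.filter (· ≠ a₀) = t.filter (· ≠ a₀) := Multiset.ext.2 fun a => by
    rw [Multiset.count_filter, Multiset.count_filter]
    split_ifs with ha
    exacts [h a ha, rfl]
  have hsplit : ∀ u : Multiset α, card u = count a₀ u + card (u.filter (· ≠ a₀)) := fun u => by
    conv_lhs => rw [← Multiset.filter_add_not (· = a₀) u]
    rw [Multiset.card_add, Multiset.filter_eq', Multiset.card_replicate]
  refine Multiset.ext.2 fun a => ?_
  by_cases ha : a = a₀
  · subst ha
    have hs := hsplit s
    have ht := hsplit t
    rw [hfilter] at hs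
    omega
  · exact h a ha

namespace T

noncomputable instance : DecidableEq T := Classical.decEq T

def mk (a : ℝ) (s : Bool) : T := some (a, s)

@[elab_as_elim]
lemma induction {p : T → Prop} (zero : p 0) (mk : ∀ a s, p (mk a s)) : ∀ x, p x
  | none => zero
  | some (a, s) => mk a s

lemma mk_ne_zero (a : ℝ) (s : Bool) : mk a s ≠ 0 := Option.some_ne_none _

lemma mk_mul_mk (a b : ℝ) (s t : Bool) : mk a s * mk b t = mk (a + b) (s || t) := rfl

lemma mk_add_mk_of_lt {a b : ℝ} (h : a < b) (s t : Bool) : mk a s + mk b t = mk b t := by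
  show add _ _ = _
  simp only [mk, add, T, if_pos h]

lemma mk_add_mk_self (a : ℝ) (s t : Bool) : mk a s + mk a t = mk a true := by
  show add _ _ = _
  simp only [mk, add, T, lt_irrefl, if_false]

/-- `val` without its junk value: `-∞ ↦ ⊥`. -/
def level : T → WithBot ℝ
  | none => ⊥
  | some (a, _) => a

@[simp] lemma level_zero : level 0 = ⊥ := rfl

@[simp] lemma level_mk (a : ℝ) (s : Bool) : level (mk a s) = a := rfl

@[simp] lemma level_tang (a : ℝ) : level (tang a) = a := rfl

@[simp] lemma level_one : level 1 = 0 := rfl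

lemma level_eq_bot_iff {x : T} : level x = ⊥ ↔ x = 0 := by
  induction x using T.induction with
  | zero => exact iff_of_true rfl rfl
  | mk a s => exact iff_of_false WithBot.coe_ne_bot (mk_ne_zero a s)

lemma level_of_ne_zero {x : T} (hx : x ≠ 0) : level x = val x := by
  induction x using T.induction with
  | zero => exact absurd rfl hx
  | mk a s => rfl

lemma level_add (x y : T) : level (x + y) = max (level x) (level y) := by
  induction x using T.induction with
  | zero => rw [zero_add, level_zero, bot_sup_eq]
  | mk a s =>
    induction y using T.induction with
    | zero => rw [add_zero, level_zero, sup_bot_eq]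
    | mk b t =>
      rcases lt_trichotomy a b with h | rfl | h
      · rw [mk_add_mk_of_lt h, level_mk, level_mk, max_eq_right (WithBot.coe_le_coe.2 h.le)]
      · rw [mk_add_mk_self, level_mk, level_mk, level_mk, max_self]
      · rw [add_comm, mk_add_mk_of_lt h, level_mk, level_mk,
          max_eq_left (WithBot.coe_le_coe.2 h.le)]

lemma level_mul (x y : T) : level (x * y) = level x + level y := by
  induction x using T.induction with
  | zero => rw [zero_mul, level_zero, WithBot.bot_add]
  | mk a s =>
    induction y using T.induction with
    | zero => rw [mul_zero, level_zero, WithBot.add_bot]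
    | mk b t => rw [mk_mul_mk, level_mk, level_mk, level_mk, WithBot.coe_add]

lemma level_pow (x : T) (k : ℕ) : level (x ^ k) = k • level x := by
  induction k with
  | zero => rw [pow_zero, zero_nsmul, level_one]
  | succ k ih => rw [pow_succ, level_mul, ih, succ_nsmul]

lemma level_mul_pow (x b : T) (k : ℕ) : level (x * b ^ k) = level x + k • level b := by
  rw [level_mul, level_pow]

lemma add_eq_left_of_level_lt {x y : T} (h : level y < level x) : x + y = x := by
  induction y using T.induction with
  | zero => exact add_zero x
  | mk b t =>
    induction x using T.induction with
    | zero => exact absurd h not_lt_bot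
    | mk a s => exact (add_comm _ _).trans (mk_add_mk_of_lt (WithBot.coe_lt_coe.1 h) t s)

lemma add_eq_nu_of_level_eq {x y : T} (h : level x = level y) : x + y = nu x := by
  induction x using T.induction with
  | zero => rw [level_zero, eq_comm, level_eq_bot_iff] at h; rw [h, add_zero]; rfl
  | mk a s =>
    induction y using T.induction with
    | zero => exact absurd h WithBot.coe_ne_bot
    | mk b t =>
      obtain rfl : a = b := WithBot.coe_injective h
      exact mk_add_mk_self a s t

lemma nu_eq_nu_one_mul (x : T) : nu x = nu 1 * x := by
  induction x using T.induction with
  | zero => rfl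
  | mk a s => exact (congrArg₂ mk (zero_add a) (Bool.true_or s)).symm

lemma isIdempotentElem_nu_one : IsIdempotentElem (nu 1 : T) :=
  congrArg₂ mk (add_zero 0) (Bool.true_or true)

lemma tang_ne_zero (a : ℝ) : tang a ≠ 0 := mk_ne_zero a false

lemma tang_mul_tang (a b : ℝ) : tang a * tang b = tang (a + b) := rfl

lemma tang_zero : tang 0 = 1 := rfl

lemma isUnit_tang (a : ℝ) : IsUnit (tang a) :=
  ⟨⟨tang a, tang (-a), by rw [tang_mul_tang, add_neg_cancel, tang_zero],
    by rw [tang_mul_tang, neg_add_cancel, tang_zero]⟩, rfl⟩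

lemma isTangible_tang (a : ℝ) : isTangible (tang a) := rfl

lemma isTangible_mul {x y : T} (hx : isTangible x) (hy : isTangible y) :
    isTangible (x * y) := by
  induction x using T.induction with
  | zero => rw [zero_mul]; trivial
  | mk a s =>
    induction y using T.induction with
    | zero => rw [mul_zero]; trivial
    | mk b t =>
      show (s || t) = false
      rw [show s = false from hx, show t = false from hy, Bool.or_false]

lemma isTangible_pow {x : T} (hx : isTangible x) (k : ℕ) : isTangible (x ^ k) := by
  induction k with
  | zero => exact isTangible_tang 0
  | succ k ih => rw [pow_succ]; exact isTangible_mul ih hx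

lemma eq_tang_of_isTangible {x : T} (hx : isTangible x) (h0 : x ≠ 0) : x = tang (val x) := by
  induction x using T.induction with
  | zero => exact absurd rfl h0
  | mk a s => rw [show s = false from hx]; rfl

lemma isUnit_of_isTangible {x : T} (hx : isTangible x) (h0 : x ≠ 0) : IsUnit x :=
  eq_tang_of_isTangible hx h0 ▸ isUnit_tang _

lemma eq_of_level_eq {x y : T} (hx : isTangible x) (hy : isTangible y)
    (h : level x = level y) : x = y := by
  rcases eq_or_ne x 0 with rfl | hx0
  · exact (level_eq_bot_iff.1 h.symm).symm
  have hy0 : y ≠ 0 := fun hy0 => hx0 (level_eq_bot_iff.1 (h.trans (level_eq_bot_iff.2 hy0)))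
  rw [eq_tang_of_isTangible hx hx0, eq_tang_of_isTangible hy hy0,
    WithBot.coe_injective ((level_of_ne_zero hx0).symm.trans (h.trans (level_of_ne_zero hy0)))]

instance : NoZeroDivisors T where
  eq_zero_or_eq_zero_of_mul_eq_zero {x y} h := by
    have := congrArg level h
    rw [level_mul, level_zero, WithBot.add_eq_bot] at this
    exact this.imp level_eq_bot_iff.1 level_eq_bot_iff.1

instance : Nontrivial T := ⟨⟨0, 1, fun h => mk_ne_zero 0 false h.symm⟩⟩

lemma level_sum {ι : Type*} (t : Finset ι) (f : ι → T) :
    level (∑ i ∈ t, f i) = t.sup fun i => level (f i) := by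
  classical
  induction t using Finset.induction_on with
  | empty => rfl
  | insert i t hi ih => rw [Finset.sum_insert hi, level_add, ih, Finset.sup_insert]

lemma level_le_level_sum {ι : Type*} {t : Finset ι} {i : ι} (hi : i ∈ t) (f : ι → T) :
    level (f i) ≤ level (∑ j ∈ t, f j) :=
  (level_sum t f).symm ▸ Finset.le_sup (f := fun j => level (f j)) hi

lemma level_sum_eq_of_le {ι : Type*} {t : Finset ι} {f : ι → T} {i : ι} (hi : i ∈ t)
    (h : ∀ j ∈ t, level (f j) ≤ level (f i)) : level (∑ j ∈ t, f j) = level (f i) :=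
  le_antisymm ((level_sum t f).symm ▸ Finset.sup_le h) (level_le_level_sum hi f)

lemma add_sum_eq_left {ι : Type*} {t : Finset ι} {f : ι → T} {x : T}
    (h : ∀ i ∈ t, level (f i) < level x) : x + ∑ i ∈ t, f i = x := by
  rcases t.eq_empty_or_nonempty with rfl | ⟨i, hi⟩
  · rw [Finset.sum_empty, add_zero]
  · refine add_eq_left_of_level_lt ?_
    rw [level_sum]
    exact (Finset.sup_lt_iff (bot_le.trans_lt (h i hi))).2 h

lemma sum_eq_of_level_lt {ι : Type*} [DecidableEq ι] {t : Finset ι} {f : ι → T} {i : ι}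
    (hi : i ∈ t) (h : ∀ j ∈ t, j ≠ i → level (f j) < level (f i)) : ∑ j ∈ t, f j = f i := by
  rw [← Finset.add_sum_erase t f hi]
  exact add_sum_eq_left fun j hj => h j (Finset.mem_of_mem_erase hj) (Finset.ne_of_mem_erase hj)

lemma level_mul_pow_lt {x y b : T} {i j : ℕ} {δ : ℝ} (hy : y ≠ 0) (hxy : level x ≤ level y)
    (hb : level b = δ) (hij : (i : ℝ) * δ < j * δ) : level (x * b ^ i) < level (y * b ^ j) := by
  have hδ : ∀ k : ℕ, k • level b = ((k * δ : ℝ) : WithBot ℝ) := fun k => by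
    rw [hb, ← WithBot.coe_nsmul, nsmul_eq_mul]
  rw [level_mul_pow, level_mul_pow, hδ, hδ]
  rcases eq_or_ne (level x) ⊥ with hx | hx
  · rw [hx, WithBot.bot_add]
    exact bot_lt_iff_ne_bot.2 (WithBot.add_ne_bot.2 ⟨mt level_eq_bot_iff.1 hy, WithBot.coe_ne_bot⟩)
  · exact WithBot.add_lt_add_of_le_of_lt hx hxy (WithBot.coe_lt_coe.2 hij)

/-- In the Newton polygon of `∑ d k b ^ k`, the segment from `k₀` to `n` lies on the top edge,
and that edge has slope `0`. -/
structure IsTopEdge (d : ℕ → T) (k₀ n : ℕ) : Prop where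
  lt : k₀ < n
  ne_zero : d n ≠ 0
  eq : d k₀ = d n
  level_le : ∀ k ≤ n, level (d k) ≤ level (d n)

lemma sum_range_eq_of_level_pos {d : ℕ → T} {j : ℕ} (hj : d j ≠ 0)
    (hle : ∀ k ≤ j, level (d k) ≤ level (d j)) {b : T} {δ : ℝ} (hb : level b = δ) (hδ : 0 < δ) :
    ∑ k ∈ Finset.range (j + 1), d k * b ^ k = d j * b ^ j := by
  refine sum_eq_of_level_lt (Finset.self_mem_range_succ j) fun k hk hkj => ?_
  have hkj' := (Finset.mem_range_succ_iff.1 hk).lt_of_ne hkj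
  exact level_mul_pow_lt hj (hle k hkj'.le) hb (mul_lt_mul_of_pos_right (by exact_mod_cast hkj') hδ)

namespace IsTopEdge

variable {d : ℕ → T} {k₀ n : ℕ}

lemma sum_eq_sum_of_level_neg (h : IsTopEdge d k₀ n) {b : T} {δ : ℝ} (hb : level b = δ)
    (hδ : δ < 0) :
    ∑ k ∈ Finset.range (n + 1), d k * b ^ k = ∑ k ∈ Finset.range (k₀ + 1), d k * b ^ k := by
  rw [← Finset.sum_range_add_sum_Ico _ (Nat.succ_le_succ h.lt.le)]
  refine add_sum_eq_left fun k hk => ?_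
  obtain ⟨hk₀k, hkn⟩ := Finset.mem_Ico.1 hk
  refine (level_mul_pow_lt (h.eq ▸ h.ne_zero) (h.eq ▸ h.level_le k (by omega)) hb ?_).trans_le
    (level_le_level_sum (Finset.self_mem_range_succ k₀) fun k => d k * b ^ k)
  exact mul_lt_mul_of_neg_right (by exact_mod_cast hk₀k) hδ

lemma sum_eq_nu_sum (h : IsTopEdge d k₀ n) {b : T} (hb : level b = 0) :
    ∑ k ∈ Finset.range (n + 1), d k * b ^ k = nu (∑ k ∈ Finset.range (k₀ + 1), d k * b ^ k) := by
  have hterm : ∀ k, level (d k * b ^ k) = level (d k) := fun k => by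
    rw [level_mul_pow, hb, smul_zero, add_zero]
  have hlow : level (∑ k ∈ Finset.range (k₀ + 1), d k * b ^ k) = level (d n) := by
    rw [level_sum_eq_of_le (Finset.self_mem_range_succ k₀) fun k hk => ?_, hterm, h.eq]
    rw [hterm, hterm, h.eq]
    exact h.level_le k (by have := Finset.mem_range.1 hk; have := h.lt; omega)
  have hhigh : level (∑ k ∈ Finset.Ico (k₀ + 1) (n + 1), d k * b ^ k) = level (d n) := by
    rw [level_sum_eq_of_le (Finset.mem_Ico.2 ⟨h.lt, n.lt_succ_self⟩) fun k hk => ?_, hterm]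
    rw [hterm, hterm]
    exact h.level_le k (by have := (Finset.mem_Ico.1 hk).2; omega)
  rw [← Finset.sum_range_add_sum_Ico _ (Nat.succ_le_succ h.lt.le),
    add_eq_nu_of_level_eq (hlow.trans hhigh.symm)]

lemma sum_eq_add_one_pow_mul_sum (h : IsTopEdge d k₀ n) (b : T) :
    ∑ k ∈ Finset.range (n + 1), d k * b ^ k =
      (b + 1) ^ (n - k₀) * ∑ k ∈ Finset.range (k₀ + 1), d k * b ^ k := by
  rcases eq_or_ne b 0 with rfl | hb
  · simp [Finset.sum_range_succ']
  have hδ := level_of_ne_zero hb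
  rcases lt_trichotomy (val b) 0 with hneg | hzero | hpos
  · have hb1 : b + 1 = 1 :=
      (add_comm _ _).trans (add_eq_left_of_level_lt (by rw [level_one, hδ]; exact_mod_cast hneg))
    rw [hb1, one_pow, one_mul, h.sum_eq_sum_of_level_neg hδ hneg]
  · rw [hzero, WithBot.coe_zero] at hδ
    have hb1 : b + 1 = nu 1 :=
      (add_comm _ _).trans (add_eq_nu_of_level_eq (by rw [hδ, level_one]))
    rw [hb1, isIdempotentElem_nu_one.pow_eq (Nat.sub_ne_zero_of_lt h.lt), ← nu_eq_nu_one_mul,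
      h.sum_eq_nu_sum hδ]
  · have hb1 : b + 1 = b := add_eq_left_of_level_lt (by rw [level_one, hδ]; exact_mod_cast hpos)
    have hle : ∀ k ≤ k₀, level (d k) ≤ level (d k₀) := fun k hk =>
      h.eq ▸ h.level_le k (hk.trans h.lt.le)
    rw [hb1, sum_range_eq_of_level_pos h.ne_zero h.level_le hδ hpos,
      sum_range_eq_of_level_pos (h.eq ▸ h.ne_zero) hle hδ hpos, h.eq, mul_left_comm, ← pow_add,
      Nat.sub_add_cancel h.lt.le]

end IsTopEdge

lemma exists_isTopEdge {n : ℕ} {c : ℕ → T} (hc : ∀ k, isTangible (c k)) (hn : c n ≠ 0)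
    (hlow : ∃ k < n, c k ≠ 0) : ∃ (ρ : ℝ) (k₀ : ℕ), IsTopEdge (fun k => c k * tang ρ ^ k) k₀ n := by
  classical
  set S := (Finset.range n).filter (c · ≠ 0)
  have hS : S.Nonempty :=
    let ⟨k, hk, hck⟩ := hlow
    ⟨k, Finset.mem_filter.2 ⟨Finset.mem_range.2 hk, hck⟩⟩
  -- `c k x ^ k` and `c n x ^ n` have the same value at `x = (val (c k) - val (c n)) / (n - k)`
  obtain ⟨k₀, hk₀S, hmax⟩ := S.exists_max_image (fun k => (val (c k) - val (c n)) / (n - k)) hS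
  set ρ := (val (c k₀) - val (c n)) / (n - k₀)
  have hlevel : ∀ k, c k ≠ 0 → level (c k * tang ρ ^ k) = ((val (c k) + k * ρ : ℝ) : WithBot ℝ) :=
    fun k hk => by
      rw [level_mul_pow, level_of_ne_zero hk, level_tang, ← WithBot.coe_nsmul, nsmul_eq_mul,
        WithBot.coe_add]
  have hle : ∀ k ∈ S, val (c k) + k * ρ ≤ val (c n) + n * ρ := fun k hk => by
    have hkn : (k : ℝ) < n := by exact_mod_cast Finset.mem_range.1 (Finset.mem_filter.1 hk).1
    have := (div_le_iff₀ (sub_pos.2 hkn)).1 (hmax k hk)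
    nlinarith
  obtain ⟨hk₀n, hck₀⟩ := Finset.mem_filter.1 hk₀S
  refine ⟨ρ, k₀, Finset.mem_range.1 hk₀n, mul_ne_zero hn (pow_ne_zero _ (tang_ne_zero ρ)), ?_, ?_⟩
  · refine eq_of_level_eq (isTangible_mul (hc _) (isTangible_pow (isTangible_tang ρ) _))
      (isTangible_mul (hc _) (isTangible_pow (isTangible_tang ρ) _)) ?_
    have hk₀ : (k₀ : ℝ) < n := by exact_mod_cast Finset.mem_range.1 hk₀n
    have hρ : ρ * (n - k₀) = val (c k₀) - val (c n) := div_mul_cancel₀ _ (sub_pos.2 hk₀).ne'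
    rw [hlevel _ hck₀, hlevel _ hn, WithBot.coe_inj]
    linear_combination -hρ
  · intro k hk
    rcases eq_or_ne (c k) 0 with h0 | h0
    · simp only [h0, zero_mul, level_zero, bot_le]
    rcases hk.lt_or_eq with hk | rfl
    · rw [hlevel _ h0, hlevel _ hn]
      exact WithBot.coe_le_coe.2 (hle k (Finset.mem_filter.2 ⟨Finset.mem_range.2 hk, h0⟩))
    · exact le_rfl

lemma sum_mul_pow_eq_mul_prod_of_rescale {n : ℕ} {c : ℕ → T} {s : Multiset T} {ρ : ℝ}
    (hs : Multiset.card s = n)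
    (h : ∀ b, ∑ k ∈ Finset.range (n + 1), c k * tang ρ ^ k * b ^ k =
      c n * tang ρ ^ n * (s.map (b + ·)).prod) (a : T) :
    ∑ k ∈ Finset.range (n + 1), c k * a ^ k = c n * ((s.map (tang ρ * ·)).map (a + ·)).prod := by
  have hρ : tang ρ * tang (-ρ) = 1 := by rw [tang_mul_tang, add_neg_cancel, tang_zero]
  convert h (tang (-ρ) * a) using 1
  · refine Finset.sum_congr rfl fun k _ => ?_
    rw [mul_assoc, ← mul_pow, ← mul_assoc, hρ, one_mul]
  · rw [mul_assoc, ← hs, ← Multiset.prod_replicate, ← Multiset.map_const', ← Multiset.prod_map_mul,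
      Multiset.map_map]
    refine congrArg (c _ * ·) (congrArg Multiset.prod (Multiset.map_congr rfl fun r _ => ?_))
    rw [Function.comp_apply, mul_add, ← mul_assoc, hρ, one_mul, add_comm]

theorem exists_sum_mul_pow_eq_mul_prod (n : ℕ) (c : ℕ → T) (hc : ∀ k, isTangible (c k))
    (hn : c n ≠ 0) :
    ∃ s : Multiset T, Multiset.card s = n ∧ (∀ r ∈ s, isTangible r) ∧
      ∀ a, ∑ k ∈ Finset.range (n + 1), c k * a ^ k = c n * (s.map (a + ·)).prod := by
  induction n using Nat.strong_induction_on generalizing c with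
  | _ n ih =>
  by_cases hlow : ∃ k < n, c k ≠ 0
  · obtain ⟨ρ, k₀, he⟩ := exists_isTopEdge hc hn hlow
    obtain ⟨s, hcard, hs, hfac⟩ := ih k₀ he.lt _
      (fun k => isTangible_mul (hc k) (isTangible_pow (isTangible_tang ρ) k)) (he.eq ▸ he.ne_zero)
    have hcard' : Multiset.card (Multiset.replicate (n - k₀) 1 + s) = n := by
      rw [Multiset.card_add, Multiset.card_replicate, hcard, Nat.sub_add_cancel he.lt.le]
    refine ⟨(Multiset.replicate (n - k₀) 1 + s).map (tang ρ * ·),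
      (Multiset.card_map _ _).trans hcard', ?_,
      sum_mul_pow_eq_mul_prod_of_rescale hcard' fun b => ?_⟩
    · simp only [Multiset.mem_map, Multiset.mem_add]
      rintro _ ⟨r, hr | hr, rfl⟩
      · rw [Multiset.eq_of_mem_replicate hr]
        exact isTangible_mul (isTangible_tang ρ) (isTangible_tang 0)
      · exact isTangible_mul (isTangible_tang ρ) (hs r hr)
    · rw [he.sum_eq_add_one_pow_mul_sum, hfac, he.eq, Multiset.map_add, Multiset.prod_add,
        Multiset.map_replicate, Multiset.prod_replicate]
      ring
  · push Not at hlow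
    refine ⟨Multiset.replicate n 0, Multiset.card_replicate n 0,
      fun r hr => Multiset.eq_of_mem_replicate hr ▸ trivial, fun a => ?_⟩
    rw [Finset.sum_range_succ, Finset.sum_eq_zero fun k hk => by
        rw [hlow k (Finset.mem_range.1 hk), zero_mul],
      zero_add, Multiset.map_replicate, add_zero, Multiset.prod_replicate]

lemma val_mul {x y : T} (hx : x ≠ 0) (hy : y ≠ 0) : val (x * y) = val x + val y := by
  induction x using T.induction with
  | zero => exact absurd rfl hx
  | mk a s =>
    induction y using T.induction with
    | zero => exact absurd rfl hy
    | mk b t => rfl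

lemma val_multiset_prod {m : Multiset T} (h : (0 : T) ∉ m) : val m.prod = (m.map val).sum := by
  induction m using Multiset.induction_on with
  | empty => rfl
  | cons x m ih =>
    rw [Multiset.mem_cons, not_or] at h
    rw [Multiset.prod_cons, Multiset.map_cons, Multiset.sum_cons,
      val_mul (Ne.symm h.1) (Multiset.prod_ne_zero h.2), ih h.2]

lemma tang_add_ne_zero (x : ℝ) (r : T) : tang x + r ≠ 0 := fun h => by
  have := congrArg level h
  rw [level_add, level_tang, level_zero] at this
  exact WithBot.coe_ne_bot (le_bot_iff.1 (this ▸ le_max_left _ _))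

lemma val_tang_add_mk (x a : ℝ) (s : Bool) : val (tang x + mk a s) = max x a := by
  have := level_add (tang x) (mk a s)
  rw [level_of_ne_zero (tang_add_ne_zero x _), level_tang, level_mk, ← WithBot.coe_max] at this
  exact WithBot.coe_injective this

lemma eventually_second_difference_val_tang_add (b : ℝ) {r : T} (hr : isTangible r) :
    ∀ᶠ ε in 𝓝[>] (0 : ℝ), val (tang (b + ε) + r) + val (tang (b - ε) + r) =
      2 * val (tang b + r) + if r = tang b then ε else 0 := by
  induction r using T.induction with
  | zero =>
    refine Eventually.of_forall fun ε => ?_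
    rw [add_zero, add_zero, add_zero, if_neg (tang_ne_zero b).symm]
    show b + ε + (b - ε) = 2 * b + 0
    ring
  | mk a s =>
    obtain rfl : s = false := hr
    rcases lt_trichotomy a b with hab | rfl | hab
    · filter_upwards [Ioo_mem_nhdsGT (sub_pos.2 hab)] with ε ⟨_, hε⟩
      rw [val_tang_add_mk, val_tang_add_mk, val_tang_add_mk, max_eq_left (by linarith),
        max_eq_left (by linarith), max_eq_left hab.le,
        if_neg fun h => hab.ne (by simpa using congrArg level h)]
      ring
    · filter_upwards [self_mem_nhdsWithin] with ε (hε : 0 < ε)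
      rw [val_tang_add_mk, val_tang_add_mk, val_tang_add_mk, max_eq_left (by linarith),
        max_eq_right (by linarith), max_self, if_pos (show mk a false = tang a from rfl)]
      ring
    · filter_upwards [Ioo_mem_nhdsGT (sub_pos.2 hab)] with ε ⟨_, hε⟩
      rw [val_tang_add_mk, val_tang_add_mk, val_tang_add_mk, max_eq_right (by linarith),
        max_eq_right (by linarith), max_eq_right hab.le,
        if_neg fun h => hab.ne' (by simpa using congrArg level h)]
      ring

lemma eventually_second_difference_val_prod (b : ℝ) {s : Multiset T} (hs : ∀ r ∈ s, isTangible r) :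
    ∀ᶠ ε in 𝓝[>] (0 : ℝ),
      val (s.map (tang (b + ε) + ·)).prod + val (s.map (tang (b - ε) + ·)).prod =
        2 * val (s.map (tang b + ·)).prod + s.count (tang b) * ε := by
  have hsum : ∀ x, val (s.map (tang x + ·)).prod = (s.map fun r => val (tang x + r)).sum :=
    fun x => by
      rw [val_multiset_prod fun h => ?_, Multiset.map_map]
      · rfl
      · obtain ⟨r, -, hr⟩ := Multiset.mem_map.1 h
        exact tang_add_ne_zero x r hr
  have := (eventually_all_finset s.toFinset).2 fun r hr =>
    eventually_second_difference_val_tang_add b (hs r (Multiset.mem_toFinset.1 hr))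
  filter_upwards [this] with ε hε
  rw [hsum, hsum, hsum, ← Multiset.sum_map_add,
    Multiset.map_congr rfl fun r hr => hε r (Multiset.mem_toFinset.2 hr), Multiset.sum_map_add,
    Multiset.sum_map_mul_left,
    Multiset.sum_map_eq_nsmul_single (tang b) fun r hr _ => if_neg hr, if_pos rfl, nsmul_eq_mul]

lemma count_tang_eq_of_forall_prod_eq {s t : Multiset T} (hs : ∀ r ∈ s, isTangible r)
    (ht : ∀ r ∈ t, isTangible r)
    (h : ∀ x : ℝ, (s.map (tang x + ·)).prod = (t.map (tang x + ·)).prod) (b : ℝ) :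
    s.count (tang b) = t.count (tang b) := by
  obtain ⟨ε, hεs, hεt, hε⟩ := ((eventually_second_difference_val_prod b hs).and
    ((eventually_second_difference_val_prod b ht).and self_mem_nhdsWithin)).exists
  simp only [h] at hεs
  have : (s.count (tang b) : ℝ) * ε = t.count (tang b) * ε := by linarith
  exact_mod_cast mul_right_cancel₀ (ne_of_gt hε) this

theorem eq_of_forall_prod_tang_add_eq {s t : Multiset T} (hcard : Multiset.card s = Multiset.card t)
    (hs : ∀ r ∈ s, isTangible r) (ht : ∀ r ∈ t, isTangible r)
    (h : ∀ x : ℝ, (s.map (tang x + ·)).prod = (t.map (tang x + ·)).prod) : s = t := by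
  refine Multiset.eq_of_card_eq_of_forall_ne_count_eq 0 hcard fun r hr => ?_
  by_cases hrt : isTangible r
  · rw [eq_tang_of_isTangible hrt hr]
    exact count_tang_eq_of_forall_prod_eq hs ht h _
  · rw [Multiset.count_eq_zero.2 (mt (hs r) hrt), Multiset.count_eq_zero.2 (mt (ht r) hrt)]

open Polynomial in
lemma eval_C_mul_prod_X_add_C (c : T) (s : Multiset T) (a : T) :
    (C c * (s.map fun r => X + C r).prod).eval a = c * (s.map (a + ·)).prod := by
  simp [eval_multiset_prod, Multiset.map_map]

open Polynomial in
theorem exists_eval_eq_leadingCoeff_mul_prod (f : T[X]) (htan : ∀ k, isTangible (f.coeff k)) :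
    ∃ s : Multiset T, Multiset.card s = f.natDegree ∧ (∀ r ∈ s, isTangible r) ∧
      ∀ a, f.eval a = f.leadingCoeff * (s.map (a + ·)).prod := by
  rcases eq_or_ne f 0 with rfl | hf
  · exact ⟨0, rfl, fun r hr => absurd hr (Multiset.notMem_zero r), fun a => by simp⟩
  obtain ⟨s, hcard, hs, heval⟩ :=
    exists_sum_mul_pow_eq_mul_prod f.natDegree f.coeff htan (leadingCoeff_ne_zero.2 hf)
  exact ⟨s, hcard, hs, fun a => (eval_eq_sum_range a).trans (heval a)⟩

end T

theorem tropical_tangible_factorization_general (f : Polynomial T)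
    (htan : ∀ k : ℕ, T.isTangible (f.coeff k)) :
    ∃! s : Multiset T,
      Multiset.card s = f.natDegree ∧ (∀ x ∈ s, T.isTangible x) ∧
      ∀ a : T, f.eval a =
        (Polynomial.C f.leadingCoeff *
          (s.map fun r => Polynomial.X + Polynomial.C r).prod).eval a := by
  obtain ⟨s, hcard, hs, hf⟩ := T.exists_eval_eq_leadingCoeff_mul_prod f htan
  refine ⟨s, ⟨hcard, hs, fun a => by rw [hf, T.eval_C_mul_prod_X_add_C]⟩, ?_⟩
  rintro t ⟨hcard', ht, hft⟩
  rcases eq_or_ne f 0 with rfl | hf0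
  · rw [Polynomial.natDegree_zero, Multiset.card_eq_zero] at hcard hcard'
    rw [hcard, hcard']
  have hu : IsUnit f.leadingCoeff :=
    T.isUnit_of_isTangible (htan _) (Polynomial.leadingCoeff_ne_zero.2 hf0)
  refine T.eq_of_forall_prod_tang_add_eq (hcard'.trans hcard.symm) ht hs fun x =>
    hu.mul_left_cancel ?_
  rw [← T.eval_C_mul_prod_X_add_C, ← hft, hf]

/-- unique factorization of tangible polynomials with tangible-real
leading coefficient into tangible linear factors, up to equivalence. -/
theorem tropical_tangible_factorization (f : Polynomial T)
    (htan : ∀ k : ℕ, T.isTangible (f.coeff k))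
    (hdeg : 1 ≤ f.natDegree)
    (hlead : ∃ c : ℝ, f.leadingCoeff = T.tang c) :
    ∃! s : Multiset T,
      Multiset.card s = f.natDegree ∧ (∀ x ∈ s, T.isTangible x) ∧
      ∀ a : T, f.eval a =
        (Polynomial.C f.leadingCoeff *
          (s.map fun r => Polynomial.X + Polynomial.C r).prod).eval a :=
  tropical_tangible_factorization_general f htan
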